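/- arXiv:2204.07971 — 6 statements merged into one kernel-verified Lean document; each statement's English description precedes it below -/
import Mathlib

section
/- In the strong CAvoider-CAvoider P4 game played on the edge set of the complete graph K_n with n ≥ 5, the second player (Blue) has a winning strategy. -/
/-!
Strong CAvoider-CAvoider P4 game on K_n, n ≥ 5: Blue (the second player) has a
winning strategy.

A play is modelled as the chronological list of claimed edges of `K_n`
(edges are non-diagonal elements of `Sym2 (Fin n)`); Red claims the edges at
even positions (0-based) and Blue those at odd positions.  In a legal play the
claimed edges are distinct and, in addition, each player's graph stays
connected throughout: every edge a player claims after his first one shares a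
vertex with one of his previously claimed edges.  A strategy for Blue is a
function from histories to edges.  Blue wins if in every maximal legal play
consistent with his strategy, Red's graph contains a copy of `P4` (the path on
four vertices) at some point at which (and before which) Blue's graph contains
no copy of `P4`,
i.e. Red loses strictly first.
-/

/-- The moves of the player moving at turns of parity `par` (Red = `0`,
Blue = `1`), extracted from the chronological list `h` of all moves. -/
def movesOf {α : Type*} (par : ℕ) (h : List α) : List α :=
  (h.zipIdx.filter fun p => p.2 % 2 = par).map Prod.fst

/-- The simple graph on `Fin n` formed by a list of edges. -/
def graphOf {n : ℕ} (l : List (Sym2 (Fin n))) : SimpleGraph (Fin n) :=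
  SimpleGraph.fromEdgeSet {e | e ∈ l}

/-- `G` contains the path on four vertices (with three edges) as a subgraph. -/
def HasP4 {V : Type*} (G : SimpleGraph V) : Prop :=
  ∃ a b c d : V, a ≠ b ∧ a ≠ c ∧ a ≠ d ∧ b ≠ c ∧ b ≠ d ∧ c ≠ d ∧
    G.Adj a b ∧ G.Adj b c ∧ G.Adj c d

/-- Each edge of the list, except the first, shares a vertex with an earlier
edge of the list; so the graph formed by the edges is connected at each stage. -/
def ConnectedMoves {n : ℕ} (l : List (Sym2 (Fin n))) : Prop :=
  ∀ i (hi : i < l.length), 0 < i → ∃ j, ∃ hj : j < i, ∃ v : Fin n,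
    v ∈ l.get ⟨i, hi⟩ ∧ v ∈ l.get ⟨j, hj.trans hi⟩

/-- A legal (partial) play: all claimed edges are distinct edges of `K_n`, and
each player's graph stays connected throughout the play. -/
def LegalPlay (n : ℕ) (h : List (Sym2 (Fin n))) : Prop :=
  h.Nodup ∧ (∀ e ∈ h, ¬ e.IsDiag) ∧
    ConnectedMoves (movesOf 0 h) ∧ ConnectedMoves (movesOf 1 h)

/-- The play `h` is consistent with the Blue strategy `f`: every move at an
odd (0-based) position is the one prescribed by `f` on the preceding history. -/
def ConsistentWith {n : ℕ} (f : List (Sym2 (Fin n)) → Sym2 (Fin n))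
    (h : List (Sym2 (Fin n))) : Prop :=
  ∀ i (hi : i < h.length), i % 2 = 1 → h.get ⟨i, hi⟩ = f (h.take i)

/-- A maximal legal play consistent with the Blue strategy `f`: it admits no
legal consistent extension. -/
def MaximalPlay (n : ℕ) (f : List (Sym2 (Fin n)) → Sym2 (Fin n))
    (h : List (Sym2 (Fin n))) : Prop :=
  LegalPlay n h ∧ ConsistentWith f h ∧
    ¬ ∃ e, LegalPlay n (h ++ [e]) ∧ ConsistentWith f (h ++ [e])

/-- Red loses strictly first in the play `h`, with respect to the forbidden
property `Forb`: after some initial segment Red's graph is forbidden while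
Blue's graph has not been forbidden up to that point. -/
def RedLosesFirst {n : ℕ} (Forb : SimpleGraph (Fin n) → Prop)
    (h : List (Sym2 (Fin n))) : Prop :=
  ∃ m ≤ h.length, Forb (graphOf (movesOf 0 (h.take m))) ∧
    ∀ k ≤ m, ¬ Forb (graphOf (movesOf 1 (h.take k)))

/-!
Blue answers Red's first edge with a disjoint edge `b₁`. Red's second edge meets the first in a
vertex `m`, so Red owns a path `x m y`; Blue picks a vertex `c` of `b₁` off this path, claims
`c m`, and from then on claims free edges at `c`. Blue's graph is thus a star and never
contains a `P4`.

A connected `P4`-free graph grown edge by edge from the path `x m y` is a star at `m` or lies on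
the triangle `m x y`. So, while Red avoids `P4`, no Red edge contains `c` (in the star case it
would be `c m`, which Blue owns), Red owns at most `n - 1` edges, and Blue, owning one edge fewer
on his turn, always finds a free edge at `c`. Red can always move as well (from `x` to a vertex
outside `{m, x, y, c}`), so a maximal play ends only after Red has built a `P4`.
-/

section Moves
variable {α : Type*}

@[simp]
theorem movesOf_nil (par : ℕ) : movesOf par ([] : List α) = [] := rfl

theorem filter_zipIdx_succ (par k : ℕ) (l : List α) :
    (l.zipIdx (k + 1)).filter (fun p => p.2 % 2 = par) =
      ((l.zipIdx k).filter fun p => (p.2 + 1) % 2 = par).map fun p => (p.1, p.2 + 1) := by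
  rw [List.zipIdx_succ, List.filter_map]
  rfl

@[simp]
theorem movesOf_zero_cons (a : α) (t : List α) : movesOf 0 (a :: t) = a :: movesOf 1 t := by
  simp only [movesOf, List.zipIdx_cons, List.filter_cons, Nat.zero_mod, decide_true,
    if_true, List.map_cons, filter_zipIdx_succ, List.map_map]
  congr 1
  exact congrArg _ (List.filter_congr fun p _ => by simp only [decide_eq_decide]; omega)

@[simp]
theorem movesOf_one_cons (a : α) (t : List α) : movesOf 1 (a :: t) = movesOf 0 t := by
  simp only [movesOf, List.zipIdx_cons, List.filter_cons, Nat.zero_mod, zero_ne_one,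
    decide_false, Bool.false_eq_true, if_false, filter_zipIdx_succ, List.map_map]
  exact congrArg _ (List.filter_congr fun p _ => by simp only [decide_eq_decide]; omega)

theorem movesOf_append_perm (h : List α) : (movesOf 0 h ++ movesOf 1 h).Perm h := by
  induction h with
  | nil => rfl
  | cons a t ih => simpa using List.perm_append_comm.trans ih

theorem length_movesOf (h : List α) :
    (movesOf 0 h).length = (h.length + 1) / 2 ∧ (movesOf 1 h).length = h.length / 2 := by
  induction h with
  | nil => simp
  | cons a t ih => simp only [movesOf_zero_cons, movesOf_one_cons, List.length_cons]; omega

theorem movesOf_prefix_append (par : ℕ) (l t : List α) :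
    movesOf par l <+: movesOf par (l ++ t) := by
  unfold movesOf
  rw [List.zipIdx_append, List.filter_append, List.map_append]
  exact List.prefix_append _ _

theorem mem_movesOf {par : ℕ} {h : List α} {e : α} :
    e ∈ movesOf par h ↔ ∃ i, ∃ hi : i < h.length, i % 2 = par ∧ h[i] = e := by
  simp only [movesOf, List.mem_map, List.mem_filter, List.mem_zipIdx_iff_getElem?,
    decide_eq_true_eq, Prod.exists, List.getElem?_eq_some_iff]
  constructor
  · rintro ⟨a, i, ⟨⟨hi, hia⟩, hpar⟩, rfl⟩
    exact ⟨i, hi, hpar, hia⟩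
  · rintro ⟨i, hi, hpar, rfl⟩
    exact ⟨_, i, ⟨⟨hi, rfl⟩, hpar⟩, rfl⟩

theorem movesOf_append_singleton (par : ℕ) (h : List α) (e : α) :
    movesOf par (h ++ [e]) = movesOf par h ++ if h.length % 2 = par then [e] else [] := by
  simp only [movesOf, List.zipIdx_append, List.filter_append, List.map_append,
    List.zipIdx_singleton, Nat.zero_add, List.filter_singleton]
  split <;> simp_all

theorem movesOf_sublist (par : ℕ) (h : List α) : (movesOf par h).Sublist h := by
  unfold movesOf
  simpa using (List.filter_sublist (l := h.zipIdx)).map Prod.fst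

theorem mem_iff_mem_movesOf {h : List α} {e : α} :
    e ∈ h ↔ e ∈ movesOf 0 h ∨ e ∈ movesOf 1 h := by
  rw [← (movesOf_append_perm h).mem_iff, List.mem_append]

theorem ne_of_mem_movesOf {h : List α} (hnd : h.Nodup) {e e' : α} (he : e ∈ movesOf 0 h)
    (he' : e' ∈ movesOf 1 h) : e ≠ e' :=
  (List.nodup_append.1 ((movesOf_append_perm h).nodup_iff.2 hnd)).2.2 e he e' he'

end Moves

section LegalPlay
variable {n : ℕ}

def Touches (e : Sym2 (Fin n)) (l : List (Sym2 (Fin n))) : Prop :=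
  ∃ e' ∈ l, ∃ v, v ∈ e ∧ v ∈ e'

theorem ConnectedMoves.of_append {l s : List (Sym2 (Fin n))} (h : ConnectedMoves (l ++ s)) :
    ConnectedMoves l := by
  intro i hi hpos
  obtain ⟨j, hj, v, hvi, hvj⟩ := h i (by simp; omega) hpos
  exact ⟨j, hj, v, by simpa [List.getElem_append_left hi] using hvi,
    by simpa [List.getElem_append_left (hj.trans hi)] using hvj⟩

theorem ConnectedMoves.of_prefix {l s : List (Sym2 (Fin n))} (h : ConnectedMoves s)
    (hls : l <+: s) : ConnectedMoves l := by
  obtain ⟨t, rfl⟩ := hls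
  exact h.of_append

theorem connectedMoves_append_singleton {l : List (Sym2 (Fin n))} {e : Sym2 (Fin n)} :
    ConnectedMoves (l ++ [e]) ↔ ConnectedMoves l ∧ (l = [] ∨ Touches e l) := by
  constructor
  · intro h
    refine ⟨h.of_append, or_iff_not_imp_left.2 fun hne => ?_⟩
    obtain ⟨j, hj, v, hve, hvj⟩ := h l.length (by simp) (List.length_pos_iff.2 hne)
    exact ⟨l[j], List.getElem_mem hj, v, by simpa using hve,
      by simpa [List.getElem_append_left hj] using hvj⟩
  · rintro ⟨hl, hle⟩ i hi hpos
    rcases Nat.lt_or_ge i l.length with hil | hil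
    · obtain ⟨j, hj, v, hvi, hvj⟩ := hl i hil hpos
      exact ⟨j, hj, v, by simpa [List.getElem_append_left hil] using hvi,
        by simpa [List.getElem_append_left (hj.trans hil)] using hvj⟩
    · obtain rfl : i = l.length := by simp at hi; omega
      obtain rfl | ⟨e', he', v, hve, hve'⟩ := hle
      · simp at hpos
      · obtain ⟨j, hj, rfl⟩ := List.mem_iff_getElem.1 he'
        exact ⟨j, hj, v, by simpa using hve, by simpa [List.getElem_append_left hj] using hve'⟩

theorem LegalPlay.take {h : List (Sym2 (Fin n))} (hl : LegalPlay n h) (k : ℕ) :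
    LegalPlay n (h.take k) :=
  ⟨hl.1.sublist (List.take_sublist _ _), fun e he => hl.2.1 e (List.mem_of_mem_take he),
    hl.2.2.1.of_prefix (by simpa using movesOf_prefix_append 0 (h.take k) (h.drop k)),
    hl.2.2.2.of_prefix (by simpa using movesOf_prefix_append 1 (h.take k) (h.drop k))⟩

theorem LegalPlay.append_singleton {h : List (Sym2 (Fin n))} {e : Sym2 (Fin n)}
    (hl : LegalPlay n h) (he : e ∉ h) (hd : ¬ e.IsDiag)
    (hconn : movesOf (h.length % 2) h = [] ∨ Touches e (movesOf (h.length % 2) h)) :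
    LegalPlay n (h ++ [e]) := by
  obtain ⟨hnd, hdiag, hc₀, hc₁⟩ := hl
  refine ⟨hnd.append (List.nodup_singleton e) (by simpa using he), ?_, ?_, ?_⟩
  · simpa [or_imp, forall_and] using ⟨hdiag, hd⟩
  all_goals
    rw [movesOf_append_singleton]
    split_ifs with hpar
    · rw [← hpar]
      exact connectedMoves_append_singleton.2 ⟨by rwa [hpar], hconn⟩
    · simpa

theorem ConsistentWith.take {f : List (Sym2 (Fin n)) → Sym2 (Fin n)}
    {h : List (Sym2 (Fin n))} (hc : ConsistentWith f h) (k : ℕ) :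
    ConsistentWith f (h.take k) := by
  intro i hi hodd
  have hik : i < k := by simp at hi; omega
  simpa [List.take_take, Nat.min_eq_left hik.le] using hc i (by simp at hi; omega) hodd

theorem ConsistentWith.append_singleton {f : List (Sym2 (Fin n)) → Sym2 (Fin n)}
    {h : List (Sym2 (Fin n))} {e : Sym2 (Fin n)} (hc : ConsistentWith f h)
    (he : h.length % 2 = 1 → e = f h) : ConsistentWith f (h ++ [e]) := by
  intro i hi hodd
  rcases Nat.lt_or_ge i h.length with hih | hih
  · simpa [List.getElem_append_left hih, List.take_append_of_le_length hih.le] using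
      hc i hih hodd
  · obtain rfl : i = h.length := by simp at hi; omega
    simpa using he hodd

end LegalPlay

section Graph
variable {n : ℕ}

theorem graphOf_adj {l : List (Sym2 (Fin n))} {x y : Fin n} :
    (graphOf l).Adj x y ↔ s(x, y) ∈ l ∧ x ≠ y := by
  simp [graphOf]

theorem graphOf_mono {l₁ l₂ : List (Sym2 (Fin n))} (h : l₁ ⊆ l₂) :
    graphOf l₁ ≤ graphOf l₂ :=
  SimpleGraph.fromEdgeSet_mono fun _ he => h he

theorem HasP4.mono {V : Type*} {G H : SimpleGraph V} (hGH : G ≤ H) (hG : HasP4 G) : HasP4 H := by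
  obtain ⟨a, b, c, d, hab, hac, had, hbc, hbd, hcd, h₁, h₂, h₃⟩ := hG
  exact ⟨a, b, c, d, hab, hac, had, hbc, hbd, hcd, hGH h₁, hGH h₂, hGH h₃⟩

theorem hasP4_graphOf {l : List (Sym2 (Fin n))} {a b c d : Fin n}
    (hab : a ≠ b) (hac : a ≠ c) (had : a ≠ d) (hbc : b ≠ c) (hbd : b ≠ d) (hcd : c ≠ d)
    (h₁ : s(a, b) ∈ l) (h₂ : s(b, c) ∈ l) (h₃ : s(c, d) ∈ l) : HasP4 (graphOf l) :=
  ⟨a, b, c, d, hab, hac, had, hbc, hbd, hcd,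
    graphOf_adj.2 ⟨h₁, hab⟩, graphOf_adj.2 ⟨h₂, hbc⟩, graphOf_adj.2 ⟨h₃, hcd⟩⟩

theorem not_hasP4_graphOf_of_forall_mem {l : List (Sym2 (Fin n))} {c : Fin n}
    (hc : ∀ e ∈ l, c ∈ e) : ¬ HasP4 (graphOf l) := by
  rintro ⟨a, b, x, d, hab, hax, had, hbx, hbd, hxd, h₁, h₂, h₃⟩
  rw [graphOf_adj] at h₁ h₂ h₃
  have m₁ := hc _ h₁.1
  have m₂ := hc _ h₂.1
  have m₃ := hc _ h₃.1
  simp only [Sym2.mem_iff] at m₁ m₂ m₃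
  grind

theorem Sym2.eq_of_forall_mem {α : Type*} {e : Sym2 α} {x y : α} (hd : ¬ e.IsDiag)
    (h : ∀ v ∈ e, v = x ∨ v = y) : e = s(x, y) := by
  induction e with
  | _ a b =>
    have ha := h a (Sym2.mem_mk_left a b)
    have hb := h b (Sym2.mem_mk_right a b)
    rw [Sym2.mk_isDiag_iff] at hd
    rcases ha with rfl | rfl <;> rcases hb with rfl | rfl <;> simp_all [Sym2.eq_swap]

def IsStarOrTriangle (m x y : Fin n) (l : List (Sym2 (Fin n))) : Prop :=
  (∀ e ∈ l, m ∈ e) ∨ ∀ e ∈ l, ∀ v ∈ e, v = m ∨ v = x ∨ v = y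

section Step
variable {m x y : Fin n} {l : List (Sym2 (Fin n))} {e : Sym2 (Fin n)}

theorem isStarOrTriangle_append_of_forall_mem (hxy : x ≠ y) (hmx : m ≠ x) (hmy : m ≠ y)
    (hx : s(m, x) ∈ l) (hy : s(m, y) ∈ l) (hstar : ∀ e ∈ l, m ∈ e) (hd : ¬ e.IsDiag)
    (he : Touches e l) (hP4 : ¬ HasP4 (graphOf (l ++ [e]))) :
    IsStarOrTriangle m x y (l ++ [e]) := by
  by_cases hme : m ∈ e
  · exact Or.inl fun e' he' => by
      rcases List.mem_append.1 he' with he' | he'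
      exacts [hstar e' he', List.mem_singleton.1 he' ▸ hme]
  obtain ⟨e', he', v, hve, hve'⟩ := he
  have hvm : v ≠ m := fun h => hme (h ▸ hve)
  set z := Sym2.Mem.other hve
  have hez : s(v, z) = e := Sym2.other_spec hve
  have hzv : z ≠ v := Sym2.other_ne hd hve
  have hzm : z ≠ m := fun h => hme (hez ▸ h ▸ Sym2.mem_mk_right v z)
  have hv : s(m, v) ∈ l := (Sym2.mem_and_mem_iff hvm.symm).1 ⟨hstar e' he', hve'⟩ ▸ he'
  -- an old edge `s(m, w)` with `w ∉ {v, z}` would give the path `w m v z`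
  have hold : ∀ e' ∈ l, ∀ w ∈ e', w = m ∨ w = v ∨ w = z := by
    intro e' he' w hw
    by_contra! hw'
    have hw : s(w, m) ∈ l :=
      (Sym2.mem_and_mem_iff hw'.1).1 ⟨hw, hstar e' he'⟩ ▸ he'
    exact hP4 (hasP4_graphOf hw'.1 hw'.2.1 hw'.2.2 hvm.symm hzm.symm hzv.symm
      (List.mem_append_left _ hw) (List.mem_append_left _ hv) (by simp [hez]))
  have hxvz := hold _ hx x (Sym2.mem_mk_right m x)
  have hyvz := hold _ hy y (Sym2.mem_mk_right m y)
  -- the distinct `x`, `y` both lie in `{v, z}`, so `{v, z} = {x, y}`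
  refine Or.inr fun e' he' w hw => ?_
  rcases List.mem_append.1 he' with he' | he'
  · have := hold e' he' w hw
    grind
  · rw [List.mem_singleton.1 he', ← hez, Sym2.mem_iff] at hw
    grind

theorem isStarOrTriangle_append_of_forall_vertex (hxy : x ≠ y) (hmx : m ≠ x) (hmy : m ≠ y)
    (hx : s(m, x) ∈ l) (hy : s(m, y) ∈ l) (hxy' : s(x, y) ∈ l)
    (htri : ∀ e ∈ l, ∀ v ∈ e, v = m ∨ v = x ∨ v = y) (hd : ¬ e.IsDiag)
    (he : Touches e l) (hP4 : ¬ HasP4 (graphOf (l ++ [e]))) :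
    ∀ e' ∈ l ++ [e], ∀ v ∈ e', v = m ∨ v = x ∨ v = y := by
  obtain ⟨e', he', v, hve, hve'⟩ := he
  set z := Sym2.Mem.other hve
  have hez : s(v, z) = e := Sym2.other_spec hve
  have hzv : z ≠ v := Sym2.other_ne hd hve
  have hz : z = m ∨ z = x ∨ z = y := by
    by_contra! hz
    obtain ⟨hzm, hzx, hzy⟩ := hz
    have hzv' : s(z, v) ∈ l ++ [e] := by simp [← hez, Sym2.eq_swap]
    have old {a b : Fin n} (h : s(a, b) ∈ l) : s(a, b) ∈ l ++ [e] := List.mem_append_left _ h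
    have old' {a b : Fin n} (h : s(a, b) ∈ l) : s(b, a) ∈ l ++ [e] :=
      old (Sym2.eq_swap ▸ h)
    apply hP4
    -- `z` hangs off the triangle `m x y` at `v`
    rcases htri e' he' v hve' with hv | hv | hv <;> subst v
    · exact hasP4_graphOf hzm hzx hzy hmx hmy hxy hzv' (old hx) (old hxy')
    · exact hasP4_graphOf hzx hzm hzy hmx.symm hxy hmy hzv' (old' hx) (old hy)
    · exact hasP4_graphOf hzy hzm hzx hmy.symm hxy.symm hmx hzv' (old' hy) (old hx)
  intro e' he' w hw
  rcases List.mem_append.1 he' with he' | he'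
  · exact htri e' he' w hw
  · rw [List.mem_singleton.1 he', ← hez, Sym2.mem_iff] at hw
    rcases hw with rfl | rfl
    exacts [htri _ ‹_› _ hve', hz]

theorem IsStarOrTriangle.append_singleton (hxy : x ≠ y) (hmx : m ≠ x) (hmy : m ≠ y)
    (hx : s(m, x) ∈ l) (hy : s(m, y) ∈ l) (hdiag : ∀ e ∈ l, ¬ e.IsDiag)
    (hl : IsStarOrTriangle m x y l) (hd : ¬ e.IsDiag) (he : Touches e l)
    (hP4 : ¬ HasP4 (graphOf (l ++ [e]))) : IsStarOrTriangle m x y (l ++ [e]) := by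
  by_cases hstar : ∀ e ∈ l, m ∈ e
  · exact isStarOrTriangle_append_of_forall_mem hxy hmx hmy hx hy hstar hd he hP4
  have htri := hl.resolve_left hstar
  push Not at hstar
  obtain ⟨e', he', hme'⟩ := hstar
  have hxy' : e' = s(x, y) := Sym2.eq_of_forall_mem (hdiag e' he') fun v hv =>
    (htri e' he' v hv).resolve_left fun h => hme' (h ▸ hv)
  exact Or.inr
    (isStarOrTriangle_append_of_forall_vertex hxy hmx hmy hx hy (hxy' ▸ he') htri hd he hP4)

end Step

theorem isStarOrTriangle_of_not_hasP4 {m x y : Fin n} (hxy : x ≠ y) {l : List (Sym2 (Fin n))}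
    (hconn : ConnectedMoves (s(m, x) :: s(m, y) :: l))
    (hdiag : ∀ e ∈ s(m, x) :: s(m, y) :: l, ¬ e.IsDiag)
    (hP4 : ¬ HasP4 (graphOf (s(m, x) :: s(m, y) :: l))) :
    IsStarOrTriangle m x y (s(m, x) :: s(m, y) :: l) := by
  induction l using List.reverseRecOn with
  | nil => exact Or.inl (by simp)
  | append_singleton l e ih =>
    simp only [← List.cons_append] at hconn hdiag hP4 ⊢
    have hmx : m ≠ x := fun h => hdiag s(m, x) (by simp) (Sym2.mk_isDiag_iff.2 h)
    have hmy : m ≠ y := fun h => hdiag s(m, y) (by simp) (Sym2.mk_isDiag_iff.2 h)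
    obtain ⟨hconn, he⟩ := connectedMoves_append_singleton.1 hconn
    have hdiag' : ∀ e ∈ s(m, x) :: s(m, y) :: l, ¬ e.IsDiag := fun e he =>
      hdiag e (List.mem_append_left _ he)
    refine (ih hconn hdiag' fun h => hP4 (h.mono (graphOf_mono (List.subset_append_left _ _))))
      |>.append_singleton hxy hmx hmy (by simp) (by simp) hdiag' (hdiag e (by simp))
        (he.resolve_left (List.cons_ne_nil _ _)) hP4

end Graph

section Counting
variable {n : ℕ}

theorem exists_notMem_of_card_lt (s : Finset (Fin n)) (hs : s.card < n) : ∃ v, v ∉ s := by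
  obtain ⟨v, -, hv⟩ := Finset.exists_mem_notMem_of_card_lt_card (s := s) (t := Finset.univ)
    (by simpa using hs)
  exact ⟨v, hv⟩

theorem length_le_of_forall_mem {l : List (Sym2 (Fin n))} {m : Fin n} (hnd : l.Nodup)
    (hdiag : ∀ e ∈ l, ¬ e.IsDiag) (hstar : ∀ e ∈ l, m ∈ e) : l.length ≤ n - 1 := by
  classical
  have hsub : l.toFinset ⊆ (Finset.univ.erase m).image fun v => s(m, v) := by
    intro e he
    rw [List.mem_toFinset] at he
    have hm := hstar e he
    refine Finset.mem_image.2 ⟨Sym2.Mem.other hm, ?_, Sym2.other_spec hm⟩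
    exact Finset.mem_erase.2 ⟨Sym2.other_ne (hdiag e he) hm, Finset.mem_univ _⟩
  calc l.length = l.toFinset.card := (List.toFinset_card_of_nodup hnd).symm
    _ ≤ ((Finset.univ.erase m).image fun v => s(m, v)).card := Finset.card_le_card hsub
    _ ≤ (Finset.univ.erase m).card := Finset.card_image_le
    _ = n - 1 := by simp

theorem length_le_three_of_forall_vertex {l : List (Sym2 (Fin n))} {m x y : Fin n}
    (hnd : l.Nodup) (hdiag : ∀ e ∈ l, ¬ e.IsDiag)
    (htri : ∀ e ∈ l, ∀ v ∈ e, v = m ∨ v = x ∨ v = y) : l.length ≤ 3 := by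
  classical
  have hsub : l.toFinset ⊆ {s(m, x), s(m, y), s(x, y)} := by
    intro e he
    rw [List.mem_toFinset] at he
    simp only [Finset.mem_insert, Finset.mem_singleton]
    by_cases hm : m ∈ e
    · rw [← Sym2.other_spec hm]
      have := htri e he _ (Sym2.other_mem hm)
      rcases this with h | h | h
      · exact absurd h (Sym2.other_ne (hdiag e he) hm)
      · exact Or.inl (by rw [h])
      · exact Or.inr (Or.inl (by rw [h]))
    · exact Or.inr (Or.inr (Sym2.eq_of_forall_mem (hdiag e he) fun v hv =>
        (htri e he v hv).resolve_left fun h => hm (h ▸ hv)))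
  calc l.length = l.toFinset.card := (List.toFinset_card_of_nodup hnd).symm
    _ ≤ 3 := (Finset.card_le_card hsub).trans Finset.card_le_three

theorem IsStarOrTriangle.length_le {l : List (Sym2 (Fin n))} {m x y : Fin n} (hn : 4 ≤ n)
    (hl : IsStarOrTriangle m x y l) (hnd : l.Nodup) (hdiag : ∀ e ∈ l, ¬ e.IsDiag) :
    l.length ≤ n - 1 := by
  rcases hl with hstar | htri
  · exact length_le_of_forall_mem hnd hdiag hstar
  · have := length_le_three_of_forall_vertex hnd hdiag htri
    omega

theorem exists_mk_notMem_of_length_lt {l B : List (Sym2 (Fin n))} {c : Fin n}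
    (hB : ∀ v, s(c, v) ∈ l → s(c, v) ∈ B) (hlen : B.length < n - 1) :
    ∃ v, v ≠ c ∧ s(c, v) ∉ l := by
  classical
  by_contra! hall
  have hmaps : Set.MapsTo (fun v => s(c, v)) ↑(Finset.univ.erase c) ↑B.toFinset :=
    fun v hv => List.mem_toFinset.2 (hB v (hall v (Finset.mem_erase.1 hv).1))
  have hinj : Set.InjOn (fun v => s(c, v)) ↑(Finset.univ.erase c) :=
    fun v _ w _ hvw => Sym2.congr_right.1 hvw
  have := (Finset.card_le_card_of_injOn _ hmaps hinj).trans (List.toFinset_card_le B)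
  simp at this
  omega

end Counting

section Opening
variable {n : ℕ}

structure Opening (r₀ b₁ r₁ : Sym2 (Fin n)) (m x y c : Fin n) : Prop where
  red₀ : r₀ = s(m, x)
  red₁ : r₁ = s(m, y)
  ne_mx : m ≠ x
  ne_my : m ≠ y
  ne_xy : x ≠ y
  centre_mem_blue : c ∈ b₁
  ne_cm : c ≠ m
  ne_cx : c ≠ x
  ne_cy : c ≠ y
  common_notMem_blue : m ∉ b₁

variable {r₀ b₁ r₁ : Sym2 (Fin n)} {m x y c : Fin n} {t : List (Sym2 (Fin n))}

theorem exists_legal_second_red_move (hn : 5 ≤ n) (hl : LegalPlay n [r₀, b₁]) :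
    ∃ e, LegalPlay n [r₀, b₁, e] := by
  induction r₀ with | _ p q =>
  induction b₁ with | _ a b =>
  obtain ⟨z, hz⟩ := exists_notMem_of_card_lt {p, q, a, b}
    (Finset.card_le_four.trans_lt (by omega))
  simp only [Finset.mem_insert, Finset.mem_singleton, not_or] at hz
  refine ⟨s(p, z), hl.append_singleton ?_ (fun h => hz.1 (Sym2.mk_isDiag_iff.1 h).symm)
    (Or.inr ⟨s(p, q), by simp, p, Sym2.mem_mk_left p z, Sym2.mem_mk_left p q⟩)⟩
  simp only [List.mem_cons, List.not_mem_nil, or_false, Sym2.eq_iff]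
  tauto

theorem Opening.centre_edge_notMem (ho : Opening r₀ b₁ r₁ m x y c) :
    s(c, m) ∉ [r₀, b₁, r₁] := by
  simp only [List.mem_cons, List.not_mem_nil, or_false, not_or]
  refine ⟨fun h => ?_, fun h => ho.common_notMem_blue (h ▸ Sym2.mem_mk_right c m),
    fun h => ?_⟩
  · have hc₀ : c ∈ s(m, x) := ho.red₀ ▸ h ▸ Sym2.mem_mk_left c m
    exact (Sym2.mem_iff.1 hc₀).elim ho.ne_cm ho.ne_cx
  · have hc₁ : c ∈ s(m, y) := ho.red₁ ▸ h ▸ Sym2.mem_mk_left c m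
    exact (Sym2.mem_iff.1 hc₁).elim ho.ne_cm ho.ne_cy

theorem Opening.isStarOrTriangle (ho : Opening r₀ b₁ r₁ m x y c)
    (hl : LegalPlay n (r₀ :: b₁ :: r₁ :: t))
    (hP4 : ¬ HasP4 (graphOf (movesOf 0 (r₀ :: b₁ :: r₁ :: t)))) :
    IsStarOrTriangle m x y (movesOf 0 (r₀ :: b₁ :: r₁ :: t)) := by
  have hdiag : ∀ e ∈ movesOf 0 (r₀ :: b₁ :: r₁ :: t), ¬ e.IsDiag := fun e he =>
    hl.2.1 e ((movesOf_sublist 0 _).subset he)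
  have hconn := hl.2.2.1
  simp only [movesOf_zero_cons, movesOf_one_cons, ho.red₀, ho.red₁] at hdiag hconn hP4 ⊢
  exact isStarOrTriangle_of_not_hasP4 ho.ne_xy hconn hdiag hP4

theorem Opening.centre_notMem_red (ho : Opening r₀ b₁ r₁ m x y c)
    (hl : LegalPlay n (r₀ :: b₁ :: r₁ :: s(c, m) :: t))
    (hP4 : ¬ HasP4 (graphOf (movesOf 0 (r₀ :: b₁ :: r₁ :: s(c, m) :: t)))) :
    ∀ e ∈ movesOf 0 (r₀ :: b₁ :: r₁ :: s(c, m) :: t), c ∉ e := by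
  intro e he hce
  rcases ho.isStarOrTriangle hl hP4 with hstar | htri
  · -- the only edge through both `c` and `m` is Blue's second edge
    have hcm : s(c, m) ∈ movesOf 1 (r₀ :: b₁ :: r₁ :: s(c, m) :: t) := by simp
    exact ne_of_mem_movesOf hl.1 he hcm
      ((Sym2.mem_and_mem_iff ho.ne_cm).1 ⟨hce, hstar e he⟩)
  · rcases htri e he c hce with h | h | h
    exacts [ho.ne_cm h, ho.ne_cx h, ho.ne_cy h]

theorem Opening.exists_red_move (hn : 5 ≤ n) (ho : Opening r₀ b₁ r₁ m x y c)
    (hl : LegalPlay n (r₀ :: b₁ :: r₁ :: t))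
    (hblue : ∀ e ∈ movesOf 1 (r₀ :: b₁ :: r₁ :: t), c ∈ e)
    (hP4 : ¬ HasP4 (graphOf (movesOf 0 (r₀ :: b₁ :: r₁ :: t))))
    (hpar : (r₀ :: b₁ :: r₁ :: t).length % 2 = 0) :
    ∃ e, LegalPlay n (r₀ :: b₁ :: r₁ :: t ++ [e]) := by
  obtain ⟨z, hz⟩ := exists_notMem_of_card_lt {m, x, y, c}
    (Finset.card_le_four.trans_lt (by omega))
  simp only [Finset.mem_insert, Finset.mem_singleton, not_or] at hz
  obtain ⟨hzm, hzx, hzy, hzc⟩ := hz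
  refine ⟨s(x, z), hl.append_singleton ?_ (fun h => hzx (Sym2.mk_isDiag_iff.1 h).symm) ?_⟩
  · rw [mem_iff_mem_movesOf]
    rintro (hred | hblue')
    · rcases ho.isStarOrTriangle hl hP4 with hstar | htri
      · rcases Sym2.mem_iff.1 (hstar _ hred) with h | h
        exacts [ho.ne_mx h, hzm h.symm]
      · rcases htri _ hred z (Sym2.mem_mk_right x z) with h | h | h
        exacts [hzm h, hzx h, hzy h]
    · rcases Sym2.mem_iff.1 (hblue _ hblue') with h | h
      exacts [ho.ne_cx h, hzc h.symm]
  · rw [hpar]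
    exact Or.inr ⟨r₀, by simp, x, Sym2.mem_mk_left x z, ho.red₀ ▸ Sym2.mem_mk_right m x⟩

theorem Opening.exists_free_edge_at_centre (ho : Opening r₀ b₁ r₁ m x y c) (hn : 4 ≤ n)
    (hl : LegalPlay n (r₀ :: b₁ :: r₁ :: s(c, m) :: t))
    (hP4 : ¬ HasP4 (graphOf (movesOf 0 (r₀ :: b₁ :: r₁ :: s(c, m) :: t))))
    (hpar : (r₀ :: b₁ :: r₁ :: s(c, m) :: t).length % 2 = 1) :
    ∃ v, v ≠ c ∧ s(c, v) ∉ r₀ :: b₁ :: r₁ :: s(c, m) :: t := by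
  refine exists_mk_notMem_of_length_lt (B := movesOf 1 (r₀ :: b₁ :: r₁ :: s(c, m) :: t))
    (fun v hv => ?_) ?_
  · exact (mem_iff_mem_movesOf.1 hv).resolve_left fun hred =>
      ho.centre_notMem_red hl hP4 _ hred (Sym2.mem_mk_left c v)
  · have hred := (ho.isStarOrTriangle hl hP4).length_le hn
      (hl.1.sublist (movesOf_sublist 0 _))
      fun e he => hl.2.1 e ((movesOf_sublist 0 _).subset he)
    have := length_movesOf (r₀ :: b₁ :: r₁ :: s(c, m) :: t)
    omega

end Opening

section Strategy
variable {n : ℕ} [NeZero n]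

noncomputable def blueCentre (b₁ r₁ : Sym2 (Fin n)) : Fin n :=
  Classical.epsilon fun v => v ∈ b₁ ∧ v ∉ r₁

noncomputable def commonVertex (r₀ r₁ : Sym2 (Fin n)) : Fin n :=
  Classical.epsilon fun v => v ∈ r₀ ∧ v ∈ r₁

noncomputable def blueStrategy : List (Sym2 (Fin n)) → Sym2 (Fin n)
  | [r₀] => Classical.epsilon fun e => ¬ e.IsDiag ∧ ∀ v ∈ e, v ∉ r₀
  | [r₀, b₁, r₁] => s(blueCentre b₁ r₁, commonVertex r₀ r₁)
  | r₀ :: b₁ :: r₁ :: b₂ :: t =>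
    let c := blueCentre b₁ r₁
    s(c, Classical.epsilon fun v => v ≠ c ∧ s(c, v) ∉ r₀ :: b₁ :: r₁ :: b₂ :: t)
  | _ => default -- `[]` and `[r₀, b₁]`, where Blue is not to move

theorem blueCentre_spec {b₁ r₁ : Sym2 (Fin n)} (hd : ¬ b₁.IsDiag) (hne : b₁ ≠ r₁) :
    blueCentre b₁ r₁ ∈ b₁ ∧ blueCentre b₁ r₁ ∉ r₁ := by
  refine Classical.epsilon_spec (p := fun v => v ∈ b₁ ∧ v ∉ r₁) ?_
  by_contra! h
  induction b₁ with
  | _ a b =>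
    have hab : a ≠ b := fun hab => hd (Sym2.mk_isDiag_iff.2 hab)
    exact hne ((Sym2.mem_and_mem_iff hab).1
      ⟨h a (Sym2.mem_mk_left a b), h b (Sym2.mem_mk_right a b)⟩).symm

theorem blueStrategy_singleton_spec (hn : 4 ≤ n) (r₀ : Sym2 (Fin n)) :
    ¬ (blueStrategy [r₀]).IsDiag ∧ ∀ v ∈ blueStrategy [r₀], v ∉ r₀ := by
  refine Classical.epsilon_spec
    (p := fun e : Sym2 (Fin n) => ¬ e.IsDiag ∧ ∀ v ∈ e, v ∉ r₀) ?_
  induction r₀ with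
  | _ p q =>
    obtain ⟨a, ha⟩ := exists_notMem_of_card_lt {p, q} (Finset.card_le_two.trans_lt (by omega))
    obtain ⟨b, hb⟩ :=
      exists_notMem_of_card_lt {p, q, a} (Finset.card_le_three.trans_lt (by omega))
    simp only [Finset.mem_insert, Finset.mem_singleton, not_or] at ha hb
    refine ⟨s(a, b), fun h => hb.2.2 (Sym2.mk_isDiag_iff.1 h).symm, fun v hv => ?_⟩
    rw [Sym2.mem_iff] at hv ⊢
    rcases hv with rfl | rfl <;> tauto

theorem blueCentre_mem_blueStrategy (r₀ b₁ r₁ : Sym2 (Fin n)) (t : List (Sym2 (Fin n))) :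
    blueCentre b₁ r₁ ∈ blueStrategy (r₀ :: b₁ :: r₁ :: t) := by
  cases t <;> exact Sym2.mem_mk_left _ _

variable {r₀ b₁ r₁ : Sym2 (Fin n)} {t : List (Sym2 (Fin n))}

theorem exists_opening (hn : 4 ≤ n) (hl : LegalPlay n (r₀ :: b₁ :: r₁ :: t))
    (hc : ConsistentWith blueStrategy (r₀ :: b₁ :: r₁ :: t)) :
    ∃ x y, Opening r₀ b₁ r₁ (commonVertex r₀ r₁) x y (blueCentre b₁ r₁) := by
  have hb₁ : b₁ = blueStrategy [r₀] := by simpa using hc 1 (by simp) rfl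
  obtain ⟨hb₁d, hb₁r₀⟩ := hb₁ ▸ blueStrategy_singleton_spec hn r₀
  have hnd := hl.1
  simp only [List.nodup_cons, List.mem_cons, not_or] at hnd
  obtain ⟨hc₁, hc₁'⟩ := blueCentre_spec hb₁d hnd.2.1.1
  have hconn : ConnectedMoves ([r₀] ++ [r₁]) := hl.2.2.1.of_prefix (by simp)
  obtain ⟨e, he, v, hv₁, hv₀⟩ :=
    (connectedMoves_append_singleton.1 hconn).2.resolve_left (List.cons_ne_nil _ _)
  obtain ⟨hm₀, hm₁⟩ : commonVertex r₀ r₁ ∈ r₀ ∧ commonVertex r₀ r₁ ∈ r₁ :=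
    Classical.epsilon_spec (p := fun v => v ∈ r₀ ∧ v ∈ r₁)
      ⟨v, List.mem_singleton.1 he ▸ hv₀, hv₁⟩
  generalize commonVertex r₀ r₁ = m at hm₀ hm₁ ⊢
  obtain ⟨x, hr₀⟩ := Sym2.mem_iff_exists.1 hm₀
  obtain ⟨y, hr₁⟩ := Sym2.mem_iff_exists.1 hm₁
  have hx : x ∈ r₀ := hr₀ ▸ Sym2.mem_mk_right _ x
  have hy : y ∈ r₁ := hr₁ ▸ Sym2.mem_mk_right _ y
  refine ⟨x, y, hr₀, hr₁, fun h => hl.2.1 r₀ (by simp) (hr₀ ▸ Sym2.mk_isDiag_iff.2 h),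
    fun h => hl.2.1 r₁ (by simp) (hr₁ ▸ Sym2.mk_isDiag_iff.2 h),
    fun hxy => hnd.1.2.1 (by rw [hr₀, hr₁, hxy]), hc₁,
    fun h => hb₁r₀ _ hc₁ (h ▸ hm₀), fun h => hb₁r₀ _ hc₁ (h ▸ hx), fun h => hc₁' (h ▸ hy),
    fun h => hb₁r₀ _ h hm₀⟩

theorem blueCentre_mem_of_mem_movesOf (hl : LegalPlay n (r₀ :: b₁ :: r₁ :: t))
    (hc : ConsistentWith blueStrategy (r₀ :: b₁ :: r₁ :: t)) :
    ∀ e ∈ movesOf 1 (r₀ :: b₁ :: r₁ :: t), blueCentre b₁ r₁ ∈ e := by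
  intro e he
  obtain ⟨i, hi, hodd, rfl⟩ := mem_movesOf.1 he
  rcases i with _ | _ | _ | i
  · simp at hodd
  · have hnd := hl.1
    simp only [List.nodup_cons, List.mem_cons, not_or] at hnd
    exact (blueCentre_spec (hl.2.1 b₁ (by simp)) hnd.2.1.1).1
  · simp at hodd
  · have hi' := hc _ hi hodd
    rw [List.get_eq_getElem] at hi'
    rw [hi']
    exact blueCentre_mem_blueStrategy r₀ b₁ r₁ (t.take i)

theorem not_hasP4_blue {h : List (Sym2 (Fin n))} (hl : LegalPlay n h)
    (hc : ConsistentWith blueStrategy h) : ¬ HasP4 (graphOf (movesOf 1 h)) := by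
  match h, hl, hc with
  | [], _, _ | [_], _, _ => exact not_hasP4_graphOf_of_forall_mem (c := default) (by simp)
  | [_, b₁], _, _ =>
    induction b₁ with
    | _ a b => exact not_hasP4_graphOf_of_forall_mem (c := a) (by simp)
  | _ :: _ :: _ :: _, hl, hc =>
    exact not_hasP4_graphOf_of_forall_mem (blueCentre_mem_of_mem_movesOf hl hc)

theorem exists_legal_consistent_extension_of_length_le_three (hn : 5 ≤ n)
    {h : List (Sym2 (Fin n))} (hlen : h.length ≤ 3) (hl : LegalPlay n h)
    (hc : ConsistentWith blueStrategy h) :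
    ∃ e, LegalPlay n (h ++ [e]) ∧ ConsistentWith blueStrategy (h ++ [e]) := by
  match h, hlen, hl, hc with
  | [], _, hl, hc =>
    refine ⟨s(⟨0, by omega⟩, ⟨1, by omega⟩),
      hl.append_singleton (by simp) ?_ (Or.inl rfl), hc.append_singleton (by simp)⟩
    simp [Fin.ext_iff]
  | [r₀], _, hl, hc =>
    obtain ⟨hd, hdisj⟩ := blueStrategy_singleton_spec (by omega) r₀
    refine ⟨_, hl.append_singleton (fun h => ?_) hd (Or.inl rfl),
      hc.append_singleton fun _ => rfl⟩
    rw [List.mem_singleton] at h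
    exact hdisj _ (by rw [h]; exact Sym2.out_fst_mem r₀) (Sym2.out_fst_mem r₀)
  | [r₀, b₁], _, hl, hc =>
    obtain ⟨e, he⟩ := exists_legal_second_red_move hn hl
    exact ⟨e, he, hc.append_singleton (by simp)⟩
  | [r₀, b₁, r₁], _, hl, hc =>
    obtain ⟨x, y, ho⟩ := exists_opening (by omega) hl hc
    exact ⟨_, hl.append_singleton ho.centre_edge_notMem
      (fun h => ho.ne_cm (Sym2.mk_isDiag_iff.1 h))
      (Or.inr ⟨b₁, by simp, _, Sym2.mem_mk_left _ _, ho.centre_mem_blue⟩),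
      hc.append_singleton fun _ => rfl⟩

theorem exists_legal_consistent_extension (hn : 5 ≤ n) {h : List (Sym2 (Fin n))}
    (hl : LegalPlay n h) (hc : ConsistentWith blueStrategy h)
    (hP4 : ¬ HasP4 (graphOf (movesOf 0 h))) :
    ∃ e, LegalPlay n (h ++ [e]) ∧ ConsistentWith blueStrategy (h ++ [e]) := by
  match h, hl, hc, hP4 with
  | r₀ :: b₁ :: r₁ :: b₂ :: t, hl, hc, hP4 =>
    obtain ⟨x, y, ho⟩ := exists_opening (by omega) hl hc
    obtain rfl : b₂ = s(blueCentre b₁ r₁, commonVertex r₀ r₁) := hc 3 (by simp) rfl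
    rcases Nat.mod_two_eq_zero_or_one (r₀ :: b₁ :: r₁ :: _ :: t).length with hpar | hpar
    · obtain ⟨e, he⟩ := ho.exists_red_move hn hl (blueCentre_mem_of_mem_movesOf hl hc) hP4 hpar
      exact ⟨e, he, hc.append_singleton (by omega)⟩
    · have hfree :=
        Classical.epsilon_spec (ho.exists_free_edge_at_centre (by omega) hl hP4 hpar)
      refine ⟨_, hl.append_singleton hfree.2 (fun h => hfree.1 (Sym2.mk_isDiag_iff.1 h).symm)
        (Or.inr ?_), hc.append_singleton fun _ => rfl⟩
      rw [hpar]
      exact ⟨b₁, by simp, _, Sym2.mem_mk_left _ _, ho.centre_mem_blue⟩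
  | [], hl, hc, _ | [_], hl, hc, _ | [_, _], hl, hc, _ | [_, _, _], hl, hc, _ =>
    exact exists_legal_consistent_extension_of_length_le_three hn (by simp) hl hc

end Strategy

/-- Blue has a winning strategy in the strong CAvoider-CAvoider `P4` game on
`K_n` for `n ≥ 5`. -/
theorem blue_wins_strong_cavoider_cavoider_P4 (n : ℕ) (hn : 5 ≤ n) :
    ∃ f : List (Sym2 (Fin n)) → Sym2 (Fin n),
      ∀ h : List (Sym2 (Fin n)), MaximalPlay n f h → RedLosesFirst HasP4 h := by
  have : NeZero n := ⟨by omega⟩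
  refine ⟨blueStrategy, fun h ⟨hl, hc, hmax⟩ => ⟨h.length, le_rfl, ?_, fun k _ => ?_⟩⟩
  · rw [List.take_length]
    by_contra hP4
    exact hmax (exists_legal_consistent_extension hn hl hc hP4)
  · exact not_hasP4_blue (hl.take k) (hc.take k)
end

section
/- Every connected component of a graph that does not contain P4 (the path on four vertices) as a subgraph is either a star or a triangle, where isolated edges and isolated vertices count as stars. -/
/-- The vertex set of the connected component of `G` containing `v`. -/
def compSet {V : Type*} (G : SimpleGraph V) (v : V) : Set V :=
  {w | G.Reachable v w}

/-- The set `S` (a connected component of `G`) induces a star in `G`: there is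
a center `c ∈ S` adjacent to all other vertices of `S`, and every edge of `G`
touching `S` is incident with `c`.  Isolated vertices (`k = 0`) and single
edges (`k = 1`) count as stars. -/
def IsStarComponent {V : Type*} (G : SimpleGraph V) (S : Set V) : Prop :=
  ∃ c ∈ S, (∀ w ∈ S, w ≠ c → G.Adj c w) ∧
    ∀ a ∈ S, ∀ b, G.Adj a b → a = c ∨ b = c

/-- The set `S` (a connected component of `G`) induces a triangle in `G`. -/
def IsTriangleComponent {V : Type*} (G : SimpleGraph V) (S : Set V) : Prop :=
  ∃ a b c : V, S = {a, b, c} ∧ a ≠ b ∧ a ≠ c ∧ b ≠ c ∧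
    G.Adj a b ∧ G.Adj a c ∧ G.Adj b c

lemma walk_mem_aux {V : Type*} {G : SimpleGraph V} {T : Set V}
    (hcl : ∀ a ∈ T, ∀ b, G.Adj a b → b ∈ T) :
    ∀ {x y : V}, G.Walk x y → x ∈ T → y ∈ T := by
  intro x y p
  induction p with
  | nil => exact id
  | cons h p ih => intro hx; exact ih (hcl _ hx _ h)

lemma compSet_subset {V : Type*} {G : SimpleGraph V} {v : V} {T : Set V}
    (hv : v ∈ T) (hcl : ∀ a ∈ T, ∀ b, G.Adj a b → b ∈ T) :
    compSet G v ⊆ T := fun _ hw => hw.elim fun p => walk_mem_aux hcl p hv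

lemma compSet_congr {V : Type*} {G : SimpleGraph V} {v u : V}
    (h : G.Reachable v u) : compSet G v = compSet G u :=
  Set.ext fun _ => ⟨fun hw => h.symm.trans hw, fun hw => h.trans hw⟩

/-- If `c` has two distinct neighbours and lies in no triangle, then in a
`P4`-free graph the component of `c` is a star centred at `c`. -/
lemma star_of_center {V : Type*} {G : SimpleGraph V} (hG : ¬ HasP4 G) {c x y : V}
    (hx : G.Adj c x) (hy : G.Adj c y) (hxy : x ≠ y)
    (htri : ∀ a b, G.Adj c a → G.Adj c b → ¬ G.Adj a b) :
    IsStarComponent G (compSet G c) := by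
  -- every edge leaving a neighbour of `c` goes back to `c`
  have key : ∀ a b, G.Adj c a → G.Adj a b → b = c := by
    intro a b hca hab
    by_contra hbc
    have hncb : ¬ G.Adj c b := fun h => htri a b hca h hab
    obtain ⟨z, hz, haz⟩ : ∃ z, G.Adj c z ∧ a ≠ z := by
      by_cases hax : a = x
      · exact ⟨y, hy, by rw [hax]; exact hxy⟩
      · exact ⟨x, hx, hax⟩
    have hbz : b ≠ z := fun h => hncb (h ▸ hz)
    exact hG ⟨b, a, c, z, hab.ne', hbc, hbz, hca.ne', haz, hz.ne,
      hab.symm, hca.symm, hz⟩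
  have hcl : ∀ a ∈ ({c} ∪ {w | G.Adj c w} : Set V), ∀ b, G.Adj a b →
      b ∈ ({c} ∪ {w | G.Adj c w} : Set V) := by
    rintro a (rfl | ha) b hab
    · exact Or.inr hab
    · exact Or.inl (key a b ha hab)
  have hsub := compSet_subset (T := {c} ∪ {w | G.Adj c w}) (Or.inl rfl) hcl
  refine ⟨c, SimpleGraph.Reachable.refl c, fun w hw hwc => ?_, fun a ha b hab => ?_⟩
  · rcases hsub hw with h | h
    · exact absurd h hwc
    · exact h
  · rcases hsub ha with rfl | h
    · exact Or.inl rfl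
    · exact Or.inr (key a b h hab)

/-- Every connected component of a `P4`-free graph is a star or a triangle
(isolated edges and isolated vertices counting as stars). -/
theorem components_of_P4_free {V : Type*} [Fintype V] (G : SimpleGraph V)
    (hG : ¬ HasP4 G) (v : V) :
    IsStarComponent G (compSet G v) ∨ IsTriangleComponent G (compSet G v) := by
  by_cases h1 : ∃ u, G.Adj v u
  · obtain ⟨u, hu⟩ := h1
    by_cases h2 : ∃ x y, G.Adj v x ∧ G.Adj v y ∧ G.Adj x y
    · -- triangle through `v`
      right
      obtain ⟨x, y, hvx, hvy, hxy⟩ := h2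
      have hcl : ∀ a ∈ ({v, x, y} : Set V), ∀ b, G.Adj a b →
          b ∈ ({v, x, y} : Set V) := by
        rintro a (rfl | rfl | rfl) b hab
        · by_contra hb
          obtain ⟨hbv, hbx, hby⟩ : b ≠ a ∧ b ≠ x ∧ b ≠ y := by
            refine ⟨hab.ne', fun h => hb (h ▸ Or.inr (Or.inl rfl)),
              fun h => hb (h ▸ Or.inr (Or.inr rfl))⟩
          exact hG ⟨b, a, x, y, hbv, hbx, hby, hvx.ne, hvy.ne, hxy.ne,
            hab.symm, hvx, hxy⟩
        · by_contra hb
          obtain ⟨hbv, hbx, hby⟩ : b ≠ v ∧ b ≠ a ∧ b ≠ y := by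
            refine ⟨fun h => hb (h ▸ Or.inl rfl), hab.ne',
              fun h => hb (h ▸ Or.inr (Or.inr rfl))⟩
          exact hG ⟨b, a, v, y, hbx, hbv, hby, hvx.ne', hxy.ne, hvy.ne,
            hab.symm, hvx.symm, hvy⟩
        · by_contra hb
          obtain ⟨hbv, hbx, hby⟩ : b ≠ v ∧ b ≠ x ∧ b ≠ a := by
            refine ⟨fun h => hb (h ▸ Or.inl rfl),
              fun h => hb (h ▸ Or.inr (Or.inl rfl)), hab.ne'⟩
          exact hG ⟨b, a, v, x, hby, hbv, hbx, hvy.ne', hxy.ne', hvx.ne,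
            hab.symm, hvy.symm, hvx⟩
      have hsub : compSet G v ⊆ {v, x, y} :=
        compSet_subset (Or.inl rfl) hcl
      have hsup : ({v, x, y} : Set V) ⊆ compSet G v := by
        rintro a (rfl | rfl | rfl)
        · exact SimpleGraph.Reachable.refl a
        · exact hvx.reachable
        · exact hvy.reachable
      exact ⟨v, x, y, Set.Subset.antisymm hsub hsup, hvx.ne, hvy.ne, hxy.ne,
        hvx, hvy, hxy⟩
    · push_neg at h2
      left
      by_cases h3 : ∃ w, G.Adj v w ∧ w ≠ u
      · obtain ⟨w, hw, hwu⟩ := h3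
        exact star_of_center hG hu hw (fun h => hwu h.symm) h2
      · push_neg at h3
        by_cases h4 : ∃ w, G.Adj u w ∧ w ≠ v
        · obtain ⟨w, hw, hwv⟩ := h4
          rw [compSet_congr hu.reachable]
          have htri : ∀ a b, G.Adj u a → G.Adj u b → ¬ G.Adj a b := by
            intro a b hua hub hab
            by_cases hav : a = v
            · subst hav; exact h2 u b hu (hab) hub
            · by_cases hbv : b = v
              · subst hbv; exact h2 u a hu hab.symm hua
              · exact hG ⟨v, u, a, b, hu.ne, Ne.symm hav, Ne.symm hbv,
                  hua.ne, hub.ne, hab.ne, hu, hua, hab⟩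
          exact star_of_center hG hu.symm hw (fun h => hwv h.symm) htri
        · push_neg at h4
          have hcl : ∀ a ∈ ({v, u} : Set V), ∀ b, G.Adj a b →
              b ∈ ({v, u} : Set V) := by
            rintro a (rfl | rfl) b hab
            · exact Or.inr (h3 b hab)
            · exact Or.inl (h4 b hab)
          have hsub := compSet_subset (T := ({v, u} : Set V)) (Or.inl rfl) hcl
          refine ⟨v, SimpleGraph.Reachable.refl v, fun w hws hwv => ?_,
            fun a ha b hab => ?_⟩
          · rcases hsub hws with rfl | rfl
            · exact absurd rfl hwv
            · exact hu
          · rcases hsub ha with rfl | rfl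
            · exact Or.inl rfl
            · exact Or.inr (h4 b hab)
  · push_neg at h1
    left
    have hcl : ∀ a ∈ ({v} : Set V), ∀ b, G.Adj a b → b ∈ ({v} : Set V) := by
      rintro a rfl b hab
      exact absurd hab (h1 b)
    have hsub := compSet_subset (T := ({v} : Set V)) rfl hcl
    refine ⟨v, SimpleGraph.Reachable.refl v, fun w hws hwv => ?_,
      fun a ha b hab => ?_⟩
    · exact absurd (hsub hws) hwv
    · rw [hsub ha] at hab
      exact absurd hab (h1 b)
end

section
/- If a graph on n = 3k vertices does not contain P4 (the path on four vertices) as a subgraph and has exactly n edges, then it is a vertex-disjoint union of triangles. -/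
open Function

variable {V : Type*} {G : SimpleGraph V}

lemma hasP4_of_adj {a b c d : V} (hab : G.Adj a b) (hbc : G.Adj b c) (hcd : G.Adj c d)
    (hac : a ≠ c) (had : a ≠ d) (hbd : b ≠ d) : HasP4 G :=
  ⟨a, b, c, d, hab.ne, hac, had, hbc.ne, hbd, hcd.ne, hab, hbc, hcd⟩

lemma eq_or_eq_of_adj_of_triangle (hG : ¬ HasP4 G) {a b c y : V} (hab : G.Adj a b)
    (hbc : G.Adj b c) (hca : G.Adj c a) (hy : G.Adj a y) : y = b ∨ y = c := by
  by_contra! h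
  exact hG (hasP4_of_adj hy.symm hab hbc h.1 h.2 hca.ne')

lemma compSet_subset_of_adj_closed {S : Set V} {v : V} (hv : v ∈ S)
    (hS : ∀ x ∈ S, ∀ y, G.Adj x y → y ∈ S) : compSet G v ⊆ S := by
  intro w hw
  rw [compSet, Set.mem_ofPred_eq, SimpleGraph.reachable_iff_reflTransGen] at hw
  induction hw with
  | refl => exact hv
  | tail _ hxy ih => exact hS _ ih _ hxy

lemma isTriangleComponent_of_triangle (hG : ¬ HasP4 G) {a b c : V} (hab : G.Adj a b)
    (hbc : G.Adj b c) (hca : G.Adj c a) : IsTriangleComponent G (compSet G a) := by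
  refine ⟨a, b, c, subset_antisymm ?_ ?_, hab.ne, hca.ne', hbc.ne, hab, hca.symm, hbc⟩
  · refine compSet_subset_of_adj_closed (by simp) ?_
    rintro x (rfl | rfl | rfl) y hy
    · rcases eq_or_eq_of_adj_of_triangle hG hab hbc hca hy with rfl | rfl <;> simp
    · rcases eq_or_eq_of_adj_of_triangle hG hbc hca hab hy with rfl | rfl <;> simp
    · rcases eq_or_eq_of_adj_of_triangle hG hca hab hbc hy with rfl | rfl <;> simp
  · rintro x (rfl | rfl | rfl)
    exacts [.rfl, hab.reachable, hca.symm.reachable]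

def IsOpenNbhd (G : SimpleGraph V) (w : V) (e : Sym2 V) : Prop :=
  ∀ y, y ∈ e ↔ G.Adj w y

def IsClosedNbhd (G : SimpleGraph V) (w : V) (e : Sym2 V) : Prop :=
  ∀ y, y ∈ e ↔ y = w ∨ G.Adj w y

lemma exists_isOpenNbhd_or_isClosedNbhd (hG : ¬ HasP4 G) {e : Sym2 V} (he : e ∈ G.edgeSet) :
    ∃ w, IsOpenNbhd G w e ∨ IsClosedNbhd G w e := by
  induction e using Sym2.ind with | h a b =>
  rw [SimpleGraph.mem_edgeSet] at he
  by_cases hc : ∃ c, G.Adj a c ∧ G.Adj b c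
  · obtain ⟨c, hac, hbc⟩ := hc
    refine ⟨c, Or.inl fun y =>
      Sym2.mem_iff.trans ⟨?_, eq_or_eq_of_adj_of_triangle hG hac.symm he hbc⟩⟩
    rintro (rfl | rfl)
    exacts [hac.symm, hbc.symm]
  push Not at hc
  have isClosedNbhd_of_unique {x z : V} (hxz : G.Adj x z) (hx : ∀ y, G.Adj x y → y = z) :
      IsClosedNbhd G x s(x, z) := fun y => by
    rw [Sym2.mem_iff]
    exact or_congr_right ⟨fun h => h ▸ hxz, hx y⟩
  by_cases ha : ∀ y, G.Adj a y → y = b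
  · exact ⟨a, Or.inr (isClosedNbhd_of_unique he ha)⟩
  push Not at ha
  obtain ⟨a', haa', ha'b⟩ := ha
  have hb : ∀ y, G.Adj b y → y = a := fun y hby => by
    by_contra hya
    exact hG (hasP4_of_adj haa'.symm he hby ha'b (fun h => hc y (h ▸ haa') hby) (Ne.symm hya))
  exact ⟨b, Or.inr (Sym2.eq_swap ▸ isClosedNbhd_of_unique he.symm hb)⟩

lemma not_isOpenNbhd_and_isClosedNbhd {w : V} {e₁ e₂ : Sym2 V} (he₁ : e₁ ∈ G.edgeSet)
    (h₁ : IsOpenNbhd G w e₁) (h₂ : IsClosedNbhd G w e₂) : False := by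
  induction e₁ using Sym2.ind with | h a b =>
  rw [SimpleGraph.mem_edgeSet] at he₁
  have hwa := (h₁ a).1 (Sym2.mem_mk_left a b)
  have hwb := (h₁ b).1 (Sym2.mem_mk_right a b)
  have he₂ : e₂ = s(w, a) :=
    (Sym2.mem_and_mem_iff hwa.ne).1 ⟨(h₂ w).2 (.inl rfl), (h₂ a).2 (.inr hwa)⟩
  rcases Sym2.mem_iff.1 (he₂ ▸ (h₂ b).2 (.inr hwb)) with h | h
  exacts [hwb.ne h.symm, he₁.ne h.symm]

lemma eq_of_isOpenNbhd_or_isClosedNbhd {w : V} {e₁ e₂ : Sym2 V} (he₁ : e₁ ∈ G.edgeSet)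
    (he₂ : e₂ ∈ G.edgeSet) (h₁ : IsOpenNbhd G w e₁ ∨ IsClosedNbhd G w e₁)
    (h₂ : IsOpenNbhd G w e₂ ∨ IsClosedNbhd G w e₂) : e₁ = e₂ := by
  rcases h₁ with h₁ | h₁ <;> rcases h₂ with h₂ | h₂
  · exact Sym2.ext fun y => (h₁ y).trans (h₂ y).symm
  · exact (not_isOpenNbhd_and_isClosedNbhd he₁ h₁ h₂).elim
  · exact (not_isOpenNbhd_and_isClosedNbhd he₂ h₂ h₁).elim
  · exact Sym2.ext fun y => (h₁ y).trans (h₂ y).symm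

noncomputable def nbhdCenter (hG : ¬ HasP4 G) (e : G.edgeSet) : V :=
  (exists_isOpenNbhd_or_isClosedNbhd hG e.2).choose

lemma nbhdCenter_spec (hG : ¬ HasP4 G) (e : G.edgeSet) :
    IsOpenNbhd G (nbhdCenter hG e) e ∨ IsClosedNbhd G (nbhdCenter hG e) e :=
  (exists_isOpenNbhd_or_isClosedNbhd hG e.2).choose_spec

lemma nbhdCenter_injective (hG : ¬ HasP4 G) : Injective (nbhdCenter hG) := fun e₁ e₂ h =>
  Subtype.ext <| eq_of_isOpenNbhd_or_isClosedNbhd e₁.2 e₂.2 (nbhdCenter_spec hG e₁)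
    (h ▸ nbhdCenter_spec hG e₂)

lemma nbhdCenter_surjective [Fintype V] [Fintype G.edgeSet] (hG : ¬ HasP4 G)
    (hcard : G.edgeFinset.card = Fintype.card V) : Surjective (nbhdCenter hG) :=
  ((Fintype.bijective_iff_injective_and_card _).2
    ⟨nbhdCenter_injective hG, by rw [← G.edgeFinset_card, hcard]⟩).2

lemma IsClosedNbhd.exists_eq_mk {v : V} {e : Sym2 V} (he : e ∈ G.edgeSet)
    (h : IsClosedNbhd G v e) : ∃ u, e = s(v, u) ∧ G.Adj v u ∧ ∀ y, G.Adj v y → y = u := by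
  obtain ⟨u, rfl⟩ : ∃ u, e = s(v, u) := ⟨_, (Sym2.other_spec ((h v).2 (.inl rfl))).symm⟩
  refine ⟨u, rfl, he, fun y hy => ?_⟩
  rcases Sym2.mem_iff.1 ((h y).2 (.inr hy)) with rfl | rfl
  exacts [(hy.ne rfl).elim, rfl]

lemma not_isOpenNbhd_of_adj_of_unique {u v : V} {e : Sym2 V} (he : e ∈ G.edgeSet)
    (hvu : G.Adj v u) (hv : ∀ y, G.Adj v y → y = u) : ¬ IsOpenNbhd G u e := by
  intro hu
  obtain ⟨x, rfl⟩ : ∃ x, e = s(v, x) := ⟨_, (Sym2.other_spec ((hu v).2 hvu.symm)).symm⟩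
  obtain rfl := hv x he
  exact G.loopless.irrefl _ ((hu x).1 (Sym2.mem_mk_right v x))

lemma not_isClosedNbhd_nbhdCenter (hG : ¬ HasP4 G) (hsurj : Surjective (nbhdCenter hG))
    (e : G.edgeSet) : ¬ IsClosedNbhd G (nbhdCenter hG e) e := by
  intro hv
  obtain ⟨u, heq, hvu, hv⟩ := hv.exists_eq_mk e.2
  obtain ⟨e', rfl⟩ := hsurj u
  rcases nbhdCenter_spec hG e' with hu | hu
  · exact not_isOpenNbhd_of_adj_of_unique e'.2 hvu hv hu
  obtain ⟨v', heq', -, hu⟩ := hu.exists_eq_mk e'.2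
  obtain rfl : e = e' := Subtype.ext <| by
    rw [heq, heq', ← hu _ hvu.symm, Sym2.eq_swap]
  exact hvu.ne rfl

lemma isTriangleComponent_of_isOpenNbhd (hG : ¬ HasP4 G) {v : V} {e : Sym2 V}
    (he : e ∈ G.edgeSet) (h : IsOpenNbhd G v e) : IsTriangleComponent G (compSet G v) := by
  induction e using Sym2.ind with | h a b =>
  exact isTriangleComponent_of_triangle hG ((h a).1 (Sym2.mem_mk_left a b)) he
    ((h b).1 (Sym2.mem_mk_right a b)).symm

theorem P4_free_extremal_is_triangle_union_general (n : ℕ)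
    (G : SimpleGraph (Fin n)) [Fintype G.edgeSet] (hG : ¬ HasP4 G)
    (hcard : G.edgeFinset.card = n) (v : Fin n) :
    IsTriangleComponent G (compSet G v) := by
  have hsurj := nbhdCenter_surjective hG (hcard.trans (Fintype.card_fin n).symm)
  obtain ⟨⟨e, he⟩, rfl⟩ := hsurj v
  rcases nbhdCenter_spec hG ⟨e, he⟩ with h | h
  · exact isTriangleComponent_of_isOpenNbhd hG he h
  · exact (not_isClosedNbhd_nbhdCenter hG hsurj _ h).elim

/-- A `P4`-free graph on `n = 3k` vertices with exactly `n` edges is a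
vertex-disjoint union of triangles: every connected component is a triangle. -/
theorem P4_free_extremal_is_triangle_union (n k : ℕ) (hk : n = 3 * k)
    (G : SimpleGraph (Fin n)) [Fintype G.edgeSet] (hG : ¬ HasP4 G)
    (hcard : G.edgeFinset.card = n) (v : Fin n) :
    IsTriangleComponent G (compSet G v) :=
  P4_free_extremal_is_triangle_union_general n G hG hcard v
end

section
/- If every connected component of a graph has at most three vertices and the graph has e edges, then the graph has at least e non-isolated vertices; moreover, if e is not divisible by 3, then it has at least e + 1 non-isolated vertices. -/
open Finset

theorem Finset.dvd_card_of_card_fiber_eq {ι M : Type*} [DecidableEq M] (f : ι → M)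
    (s : Finset ι) (k : ℕ) (h : ∀ x ∈ s, #{y ∈ s | f y = f x} = k) : k ∣ #s := by
  rw [card_eq_sum_card_image f s]
  refine dvd_sum fun _ hb => ?_
  obtain ⟨x, hx, rfl⟩ := mem_image.mp hb
  exact (h x hx).symm.dvd

namespace SimpleGraph

variable {V : Type*} (G : SimpleGraph V)

theorem degree_lt_ncard_compSet [Finite V] (v : V) [Fintype (G.neighborSet v)] :
    G.degree v < (compSet G v).ncard := by
  have hsub : insert v (G.neighborSet v) ⊆ compSet G v := by
    rintro w (rfl | hw)
    · exact Reachable.refl w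
    · exact (G.mem_neighborSet v w).mp hw |>.reachable
  calc G.degree v < (insert v (G.neighborSet v)).ncard := by
        rw [Set.ncard_insert_of_notMem G.notMem_neighborSet_self, Set.ncard_eq_toFinset_card',
          Set.toFinset_card, card_neighborSet_eq_degree]
        exact Nat.lt_succ_self _
    _ ≤ (compSet G v).ncard := Set.ncard_le_ncard hsub

theorem dvd_ncard_support_of_ncard_compSet_eq [Finite V] {k : ℕ}
    (hk : ∀ v ∈ G.support, (compSet G v).ncard = k) : k ∣ G.support.ncard := by
  classical
  have := Fintype.ofFinite V
  rw [Set.ncard_eq_toFinset_card']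
  refine dvd_card_of_card_fiber_eq G.connectedComponentMk _ k fun v hv => ?_
  rw [Set.mem_toFinset] at hv
  rw [← hk v hv, ← Set.ncard_coe_finset]
  congr 1
  ext w
  simp only [coe_filter, Set.mem_toFinset, Set.mem_ofPred_eq, ConnectedComponent.eq, compSet]
  constructor
  · exact fun h => h.2.symm
  · intro h
    refine ⟨?_, h.symm⟩
    by_cases hvw : w = v
    · exact hvw ▸ hv
    · exact mem_support_of_reachable hvw h.symm

section Handshake

variable [Fintype V] [DecidableRel G.Adj] [Fintype G.edgeSet] {d : ℕ}

theorem sum_degrees_support_eq_two_mul_card_edgeFinset :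
    ∑ v ∈ G.support, G.degree v = 2 * #G.edgeFinset := by
  convert G.sum_degrees_support_eq_twice_card_edges

theorem two_mul_card_edgeFinset_le_of_degree_le (hd : ∀ v, G.degree v ≤ d) :
    2 * #G.edgeFinset ≤ d * G.support.ncard := by
  rw [← sum_degrees_support_eq_two_mul_card_edgeFinset, Set.ncard_eq_toFinset_card', mul_comm,
    ← smul_eq_mul, ← sum_const]
  exact sum_le_sum fun v _ => hd v

theorem degree_eq_of_two_mul_card_edgeFinset_eq (hd : ∀ v, G.degree v ≤ d)
    (heq : 2 * #G.edgeFinset = d * G.support.ncard) : ∀ v ∈ G.support, G.degree v = d := by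
  by_contra! ⟨v, hv, hvd⟩
  have hlt : ∑ u ∈ G.support, G.degree u < ∑ _u ∈ G.support, d :=
    sum_lt_sum (fun u _ => hd u) ⟨v, Set.mem_toFinset.mpr hv, (hd v).lt_of_ne hvd⟩
  rw [sum_degrees_support_eq_two_mul_card_edgeFinset, sum_const, smul_eq_mul,
    ← Set.ncard_eq_toFinset_card', heq, mul_comm] at hlt
  exact lt_irrefl _ hlt

end Handshake

end SimpleGraph

/-- If every connected component of a graph has at most three vertices and the
graph has `e` edges, then it has at least `e` non-isolated vertices; moreover,
if `e` is not divisible by `3`, then it has at least `e + 1` non-isolated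
vertices. -/
theorem CC_gt_three_free_support_bound {V : Type*} [Fintype V]
    (G : SimpleGraph V) [Fintype G.edgeSet]
    (hG : ∀ v : V, (compSet G v).ncard ≤ 3) (e : ℕ)
    (he : G.edgeFinset.card = e) :
    e ≤ {v : V | ∃ w, G.Adj v w}.ncard ∧
      (¬ (3 ∣ e) → e + 1 ≤ {v : V | ∃ w, G.Adj v w}.ncard) := by
  classical
  change e ≤ G.support.ncard ∧ (¬ 3 ∣ e → e + 1 ≤ G.support.ncard)
  have hdeg (v : V) : G.degree v ≤ 2 :=
    Nat.lt_succ_iff.mp ((G.degree_lt_ncard_compSet v).trans_le (hG v))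
  have hle := G.two_mul_card_edgeFinset_le_of_degree_le hdeg
  refine ⟨by omega, fun h3 => ?_⟩
  by_contra! hlt
  have h2reg := G.degree_eq_of_two_mul_card_edgeFinset_eq hdeg (by omega)
  have htriangle : ∀ v ∈ G.support, (compSet G v).ncard = 3 := fun v hv =>
    le_antisymm (hG v) (h2reg v hv ▸ G.degree_lt_ncard_compSet v :)
  have hn : G.support.ncard = e := by omega
  exact h3 (hn ▸ G.dvd_ncard_support_of_ncard_compSet_eq htriangle)
end

section
/- If every connected component of a graph has at most three vertices, the graph has exactly 3t + 1 edges for some integer t ≥ 0, and at least one of its connected components is a path on three vertices, then the graph has at least 3t + 3 non-isolated vertices. Consequently, if such a graph shares its vertex set with a vertex-disjoint union of t triangles (which has 3t vertices incident to its edges), then at least three non-isolated vertices of the first graph are isolated in the second. -/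
/-- The set `S` (a connected component of `G`) induces a path on three
vertices (with two edges) in `G`. -/
def IsP3Component {V : Type*} (G : SimpleGraph V) (S : Set V) : Prop :=
  ∃ a b c : V, S = {a, b, c} ∧ a ≠ b ∧ a ≠ c ∧ b ≠ c ∧
    G.Adj a b ∧ G.Adj b c ∧ ¬ G.Adj a c

open Finset

set_option maxHeartbeats 1000000

lemma reach_adj {V : Type*} {G : SimpleGraph V} {a x : V}
    (h : G.Reachable a x) (hne : a ≠ x) : ∃ w, G.Adj x w := by
  obtain ⟨p⟩ := h.symm
  cases p with
  | nil => exact absurd rfl hne.symm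
  | cons h p => exact ⟨_, h⟩

theorem support_lemma {V : Type*} [Fintype V]
    (G : SimpleGraph V) [Fintype G.edgeSet] (t : ℕ)
    (hG : ∀ v : V, (compSet G v).ncard ≤ 3)
    (hcard : G.edgeFinset.card = 3 * t + 1)
    (hP3 : ∃ v : V, IsP3Component G (compSet G v)) :
    3 * t + 3 ≤ {v : V | ∃ w, G.Adj v w}.ncard := by
  classical
  haveI : Fintype G.ConnectedComponent := Fintype.ofFinite _
  set f : V → G.ConnectedComponent := G.connectedComponentMk with hf
  set S : Finset V := univ.filter (fun v => ∃ w, G.Adj v w) with hS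
  have hSset : {v : V | ∃ w, G.Adj v w} = ↑S := by ext v; simp [hS]
  rw [hSset, Set.ncard_coe_finset]
  set s : G.ConnectedComponent → ℕ :=
    fun c => (S.filter (fun v => f v = c)).card with hs
  have Scard : S.card = ∑ c, s c :=
    Finset.card_eq_sum_card_fiberwise (fun x _ => mem_univ _)
  set g : Sym2 V → G.ConnectedComponent := fun e => f (Quot.out e).1 with hg
  set e_ : G.ConnectedComponent → ℕ :=
    fun c => (G.edgeFinset.filter (fun e => g e = c)).card with he
  have Ecard : G.edgeFinset.card = ∑ c, e_ c :=
    Finset.card_eq_sum_card_fiberwise (fun x _ => mem_univ _)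
  have edge_mem : ∀ {a b : V}, G.Adj a b → s(a,b) ∈ G.edgeFinset := by
    intro a b h; simpa using h
  have edge_adj : ∀ {a b : V}, s(a,b) ∈ G.edgeFinset → G.Adj a b := by
    intro a b h; simpa using h
  -- g on an explicit edge
  have hgadj : ∀ u v : V, G.Adj u v → g s(u, v) = f u := by
    intro u v huv
    have h1 : (Quot.out (s(u,v) : Sym2 V)).1 ∈ (s(u,v) : Sym2 V) := Sym2.out_fst_mem _
    rw [Sym2.mem_iff] at h1
    rcases h1 with h1 | h1 <;> simp only [hg, h1]
    exact (SimpleGraph.ConnectedComponent.eq.2 huv.reachable).symm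
  -- endpoints of an edge in the fiber of c lie in the fiber of c
  have hend : ∀ (c : G.ConnectedComponent) (u v : V), G.Adj u v →
      g s(u, v) = c → f u = c ∧ f v = c := by
    intro c u v huv hgc
    rw [hgadj u v huv] at hgc
    exact ⟨hgc, (SimpleGraph.ConnectedComponent.eq.2 huv.symm.reachable).trans hgc⟩
  -- vertices in a fiber with an edge are in S
  have hfib_sub : ∀ (c : G.ConnectedComponent) (u : V), f u = c →
      S.filter (fun v => f v = c) = univ.filter (fun v => f v = c) →
      True := fun _ _ _ _ => trivial
  -- main classification
  have key : ∀ c : G.ConnectedComponent,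
      (e_ c = 0 ∧ s c = 0) ∨ (e_ c = 1 ∧ s c = 2) ∨
      ((e_ c = 2 ∨ e_ c = 3) ∧ s c = 3) := by
    intro c
    by_cases hE : (G.edgeFinset.filter (fun e => g e = c)) = ∅
    · left
      constructor
      · show (G.edgeFinset.filter (fun e => g e = c)).card = 0
        simp [hE]
      · show (S.filter (fun v => f v = c)).card = 0
        rw [Finset.card_eq_zero]
        rw [Finset.eq_empty_iff_forall_notMem]
        intro v hv
        simp only [hS, mem_filter, mem_univ, true_and] at hv
        obtain ⟨⟨w, hw⟩, hvc⟩ := hv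
        have : s(v, w) ∈ G.edgeFinset.filter (fun e => g e = c) := by
          rw [mem_filter]
          exact ⟨edge_mem hw, by rw [hgadj v w hw]; exact hvc⟩
        rw [hE] at this; exact absurd this (notMem_empty _)
    · right
      obtain ⟨e₀, he₀⟩ := Finset.nonempty_iff_ne_empty.2 hE
      rw [mem_filter] at he₀
      obtain ⟨he₀E, he₀c⟩ := he₀
      induction e₀ using Sym2.inductionOn with
      | hf u v =>
      have huv : G.Adj u v := edge_adj he₀E
      obtain ⟨hu, hv⟩ := hend c u v huv he₀c
      -- the fiber set equals compSet G u
      have hPset : {w : V | f w = c} = compSet G u := by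
        ext w
        simp only [Set.mem_setOf_eq, compSet]
        rw [← hu, hf]
        rw [SimpleGraph.ConnectedComponent.eq]
        exact ⟨fun h => h.symm, fun h => h.symm⟩
      -- every vertex of the fiber has a neighbor
      have hnbr : ∀ w : V, f w = c → ∃ z, G.Adj w z := by
        intro w hw
        have : G.Reachable u w := by
          have : w ∈ compSet G u := by rw [← hPset]; exact hw
          exact this
        by_cases hwu : u = w
        · exact ⟨v, hwu ▸ huv⟩
        · exact reach_adj this hwu
      have hsfil : S.filter (fun v => f v = c) = univ.filter (fun v => f v = c) := by
        ext w
        simp only [hS, mem_filter, mem_univ, true_and, filter_filter]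
        exact ⟨fun h => h.2, fun h => ⟨hnbr w h, h⟩⟩
      set P : Finset V := univ.filter (fun v => f v = c) with hP
      have hscP : s c = P.card := by
        show (S.filter (fun v => f v = c)).card = P.card
        rw [hsfil]
      have hPcard : P.card ≤ 3 := by
        have : (↑P : Set V) = compSet G u := by
          rw [← hPset]; ext w; simp [hP]
        calc P.card = (↑P : Set V).ncard := (Set.ncard_coe_finset P).symm
          _ = (compSet G u).ncard := by rw [this]
          _ ≤ 3 := hG u
      have huP : u ∈ P := by simp [hP, hu]
      have hvP : v ∈ P := by simp [hP, hv]
      have hune : u ≠ v := huv.ne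
      by_cases hthird : ∃ x ∈ P, x ≠ u ∧ x ≠ v
      · -- three-vertex component
        right
        obtain ⟨x, hxP, hxu, hxv⟩ := hthird
        have hsub : ({u, v, x} : Finset V) ⊆ P := by
          intro y hy; simp only [mem_insert, mem_singleton] at hy
          rcases hy with rfl | rfl | rfl <;> assumption
        have hcard3 : ({u, v, x} : Finset V).card = 3 := by
          rw [card_insert_of_notMem (by simp [hune, hxu.symm]),
            card_insert_of_notMem (by simp [hxv.symm]), card_singleton]
        have hPeq : P = {u, v, x} :=
          (Finset.eq_of_subset_of_card_le hsub (by omega)).symm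
        have hs3 : s c = 3 := by rw [hscP, hPeq]; exact hcard3
        refine ⟨?_, hs3⟩
        -- x's membership in fiber
        have hx : f x = c := by
          have := hxP; simp only [hP, mem_filter, mem_univ, true_and] at this
          exact this
        -- x is adjacent to u or v
        have hxadj : G.Adj x u ∨ G.Adj x v := by
          obtain ⟨z, hz⟩ := hnbr x hx
          have hzc : f z = c := by
            rw [hf, ← hx, SimpleGraph.ConnectedComponent.eq]
            exact hz.symm.reachable
          have hzP : z ∈ P := by simp [hP, hzc]
          rw [hPeq] at hzP
          simp only [mem_insert, mem_singleton] at hzP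
          rcases hzP with rfl | rfl | rfl
          · exact Or.inl hz
          · exact Or.inr hz
          · exact absurd rfl hz.ne
        -- the fiber of edges is contained in the three possible edges
        have hEsub : G.edgeFinset.filter (fun e => g e = c) ⊆
            {s(u,v), s(u,x), s(v,x)} := by
          intro e hee
          rw [mem_filter] at hee
          obtain ⟨heE, hec⟩ := hee
          induction e using Sym2.inductionOn with
          | hf a b =>
          have hab : G.Adj a b := edge_adj heE
          obtain ⟨ha, hb⟩ := hend c a b hab hec
          have haP : a ∈ P := by simp [hP, ha]
          have hbP : b ∈ P := by simp [hP, hb]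
          rw [hPeq] at haP hbP
          have habne : a ≠ b := hab.ne
          simp only [mem_insert, mem_singleton] at haP hbP ⊢
          rcases haP with rfl | rfl | rfl <;> rcases hbP with rfl | rfl | rfl <;>
            first
              | exact absurd rfl habne
              | exact Or.inl rfl
              | exact Or.inl Sym2.eq_swap
              | exact Or.inr (Or.inl rfl)
              | exact Or.inr (Or.inl Sym2.eq_swap)
              | exact Or.inr (Or.inr rfl)
              | exact Or.inr (Or.inr Sym2.eq_swap)
        have hEub : e_ c ≤ 3 := by
          have h1 := card_le_card hEsub
          have h2 := card_insert_le (s(u,v) : Sym2 V) ({s(u,x), s(v,x)} : Finset (Sym2 V))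
          have h3 := card_insert_le (s(u,x) : Sym2 V) ({s(v,x)} : Finset (Sym2 V))
          have h4 : ({s(v,x)} : Finset (Sym2 V)).card = 1 := card_singleton _
          show (G.edgeFinset.filter (fun e => g e = c)).card ≤ 3
          omega
        have hmemuv : s(u,v) ∈ G.edgeFinset.filter (fun e => g e = c) := by
          rw [mem_filter]
          exact ⟨edge_mem huv, by rw [hgadj u v huv]; exact hu⟩
        have hElb : 2 ≤ (G.edgeFinset.filter (fun e => g e = c)).card := by
          rcases hxadj with hxu' | hxv'
          · have hmem2 : s(x,u) ∈ G.edgeFinset.filter (fun e => g e = c) := by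
              rw [mem_filter]
              exact ⟨edge_mem hxu', by rw [hgadj x u hxu']; exact hx⟩
            have hne2 : s(u,v) ≠ s(x,u) := by
              rw [Ne, Sym2.eq_iff]
              rintro (⟨h1, h2⟩ | ⟨h1, h2⟩)
              · exact hxu h1.symm
              · exact hxv h2.symm
            show 2 ≤ (G.edgeFinset.filter (fun e => g e = c)).card
            have : ({s(u,v), s(x,u)} : Finset (Sym2 V)) ⊆
                G.edgeFinset.filter (fun e => g e = c) := by
              intro y hy; simp only [mem_insert, mem_singleton] at hy
              rcases hy with rfl | rfl <;> assumption
            calc 2 = ({s(u,v), s(x,u)} : Finset (Sym2 V)).card := by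
                  rw [card_insert_of_notMem (by simpa using hne2), card_singleton]
              _ ≤ _ := card_le_card this
          · have hmem2 : s(x,v) ∈ G.edgeFinset.filter (fun e => g e = c) := by
              rw [mem_filter]
              exact ⟨edge_mem hxv', by rw [hgadj x v hxv']; exact hx⟩
            have hne2 : s(u,v) ≠ s(x,v) := by
              rw [Ne, Sym2.eq_iff]
              rintro (⟨h1, h2⟩ | ⟨h1, h2⟩)
              · exact hxu h1.symm
              · exact hune h1
            show 2 ≤ (G.edgeFinset.filter (fun e => g e = c)).card
            have : ({s(u,v), s(x,v)} : Finset (Sym2 V)) ⊆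
                G.edgeFinset.filter (fun e => g e = c) := by
              intro y hy; simp only [mem_insert, mem_singleton] at hy
              rcases hy with rfl | rfl <;> assumption
            calc 2 = ({s(u,v), s(x,v)} : Finset (Sym2 V)).card := by
                  rw [card_insert_of_notMem (by simpa using hne2), card_singleton]
              _ ≤ _ := card_le_card this
        have he_eq : e_ c = (G.edgeFinset.filter (fun e => g e = c)).card := rfl
        omega
      · -- two-vertex component
        left
        push_neg at hthird
        have hPeq : P = {u, v} := by
          apply Finset.Subset.antisymm
          · intro y hy
            by_cases hyu : y = u
            · simp [hyu]
            · by_cases hyv : y = v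
              · simp [hyv]
              · exact absurd (hthird y hy hyu) hyv
          · intro y hy; simp only [mem_insert, mem_singleton] at hy
            rcases hy with rfl | rfl <;> assumption
        have hs2 : s c = 2 := by
          rw [hscP, hPeq]
          rw [card_insert_of_notMem (by simp [hune]), card_singleton]
        refine ⟨?_, hs2⟩
        have hEeq : G.edgeFinset.filter (fun e => g e = c) = {s(u,v)} := by
          apply Finset.Subset.antisymm
          · intro e hee
            rw [mem_filter] at hee
            obtain ⟨heE, hec⟩ := hee
            induction e using Sym2.inductionOn with
            | hf a b =>
            have hab : G.Adj a b := edge_adj heE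
            obtain ⟨ha, hb⟩ := hend c a b hab hec
            have haP : a ∈ P := by simp [hP, ha]
            have hbP : b ∈ P := by simp [hP, hb]
            rw [hPeq] at haP hbP
            have habne : a ≠ b := hab.ne
            simp only [mem_insert, mem_singleton] at haP hbP ⊢
            rcases haP with rfl | rfl <;> rcases hbP with rfl | rfl <;>
              first
                | exact absurd rfl habne
                | exact rfl
                | exact Sym2.eq_swap
          · intro e hee
            simp only [mem_singleton] at hee
            rw [hee, mem_filter]
            exact ⟨edge_mem huv, by rw [hgadj u v huv]; exact hu⟩
        show (G.edgeFinset.filter (fun e => g e = c)).card = 1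
        rw [hEeq, card_singleton]
  -- the P3 component
  obtain ⟨v₀, a, b, cc, hset, hab, hac, hbc, hAab, hAbc, hnAac⟩ := hP3
  have hamem : G.Reachable v₀ a := by
    have : a ∈ compSet G v₀ := by rw [hset]; simp
    exact this
  have hbmem : G.Reachable v₀ b := by
    have : b ∈ compSet G v₀ := by rw [hset]; simp
    exact this
  have hcmem : G.Reachable v₀ cc := by
    have : cc ∈ compSet G v₀ := by rw [hset]; simp
    exact this
  set c₀ : G.ConnectedComponent := f v₀ with hc₀
  have hfa : f a = c₀ := SimpleGraph.ConnectedComponent.eq.2 hamem.symm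
  have hfb : f b = c₀ := SimpleGraph.ConnectedComponent.eq.2 hbmem.symm
  have hfc : f cc = c₀ := SimpleGraph.ConnectedComponent.eq.2 hcmem.symm
  have hmem_iff : ∀ w : V, f w = c₀ ↔ (w = a ∨ w = b ∨ w = cc) := by
    intro w
    constructor
    · intro hw
      have : w ∈ compSet G v₀ := (SimpleGraph.ConnectedComponent.eq.1 hw).symm
      rw [hset] at this
      simpa using this
    · rintro (rfl | rfl | rfl) <;> assumption
  have hSfil : S.filter (fun w => f w = c₀) = ({a, b, cc} : Finset V) := by
    ext w
    simp only [hS, mem_filter, mem_univ, true_and, filter_filter, mem_insert,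
      mem_singleton, true_and]
    constructor
    · rintro ⟨-, hw⟩
      exact (hmem_iff w).1 hw
    · rintro (rfl | rfl | rfl)
      · exact ⟨⟨b, hAab⟩, hfa⟩
      · exact ⟨⟨a, hAab.symm⟩, hfb⟩
      · exact ⟨⟨b, hAbc.symm⟩, hfc⟩
  have hs0 : s c₀ = 3 := by
    show (S.filter (fun w => f w = c₀)).card = 3
    rw [hSfil]
    rw [card_insert_of_notMem (by simp [hab, hac]),
      card_insert_of_notMem (by simp [hbc]), card_singleton]
  have hEeq0 : G.edgeFinset.filter (fun e => g e = c₀) = {s(a,b), s(b,cc)} := by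
    apply Finset.Subset.antisymm
    · intro e hee
      rw [mem_filter] at hee
      obtain ⟨heE, hec⟩ := hee
      induction e using Sym2.inductionOn with
      | hf x y =>
      have hxy : G.Adj x y := edge_adj heE
      obtain ⟨hx, hy⟩ := hend c₀ x y hxy hec
      have hxm := (hmem_iff x).1 hx
      have hym := (hmem_iff y).1 hy
      have hxyne : x ≠ y := hxy.ne
      simp only [mem_insert, mem_singleton]
      rcases hxm with rfl | rfl | rfl <;> rcases hym with rfl | rfl | rfl <;>
        first
          | exact absurd rfl hxyne
          | exact absurd hxy hnAac
          | exact absurd hxy.symm hnAac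
          | exact Or.inl rfl
          | exact Or.inl Sym2.eq_swap
          | exact Or.inr rfl
          | exact Or.inr Sym2.eq_swap
    · intro e hee
      simp only [mem_insert, mem_singleton] at hee
      rcases hee with rfl | rfl
      · rw [mem_filter]
        exact ⟨edge_mem hAab, by rw [hgadj a b hAab]; exact hfa⟩
      · rw [mem_filter]
        exact ⟨edge_mem hAbc, by rw [hgadj b cc hAbc]; exact hfb⟩
  have he0 : e_ c₀ = 2 := by
    show (G.edgeFinset.filter (fun e => g e = c₀)).card = 2
    rw [hEeq0]
    rw [card_insert_of_notMem, card_singleton]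
    rw [mem_singleton, Sym2.eq_iff]
    rintro (⟨h1, h2⟩ | ⟨h1, h2⟩)
    · exact hbc h2
    · exact hac h1
  -- the final counting argument
  have hsum_e : ∑ c, e_ c = 3 * t + 1 := by rw [← Ecard]; exact hcard
  rw [Scard]
  have hle : ∀ c, e_ c ≤ s c := by
    intro c
    rcases key c with ⟨h1, h2⟩ | ⟨h1, h2⟩ | ⟨h1, h2⟩ <;> omega
  by_contra hcon
  push_neg at hcon
  have h1 : ∑ c ∈ univ.erase c₀, e_ c ≤ ∑ c ∈ univ.erase c₀, s c :=
    Finset.sum_le_sum (fun i _ => hle i)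
  have h2 : ∑ c, e_ c = e_ c₀ + ∑ c ∈ univ.erase c₀, e_ c :=
    (Finset.add_sum_erase _ _ (mem_univ c₀)).symm
  have h3 : ∑ c, s c = s c₀ + ∑ c ∈ univ.erase c₀, s c :=
    (Finset.add_sum_erase _ _ (mem_univ c₀)).symm
  have h4 : ∑ c ∈ univ.erase c₀, s c ≤ ∑ c ∈ univ.erase c₀, e_ c := by omega
  have h5 : ∀ c ∈ univ.erase c₀, e_ c = s c :=
    (Finset.sum_eq_sum_iff_of_le (fun i _ => hle i)).1 (le_antisymm h1 h4)
  have h6 : ∀ c ∈ univ.erase c₀, (3 : ℕ) ∣ e_ c := by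
    intro c hc
    have := h5 c hc
    rcases key c with ⟨h1', h2'⟩ | ⟨h1', h2'⟩ | ⟨h1', h2'⟩ <;> omega
  have h7 : (3 : ℕ) ∣ ∑ c ∈ univ.erase c₀, e_ c := Finset.dvd_sum h6
  omega

/-- If every connected component of `G` has at most three vertices, `G` has
exactly `3 * t + 1` edges, and some connected component of `G` is a path on
three vertices, then `G` has at least `3 * t + 3` non-isolated vertices.
Consequently, if `H` is a graph on the same vertex set that is a
vertex-disjoint union of `t` triangles (every component of `H` is a triangle
or an isolated vertex, and `H` has exactly `3 * t` non-isolated vertices),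
then at least three non-isolated vertices of `G` are isolated in `H`. -/
theorem CC_gt_three_free_P3_support_bound {V : Type*} [Fintype V]
    (G : SimpleGraph V) [Fintype G.edgeSet] (t : ℕ)
    (hG : ∀ v : V, (compSet G v).ncard ≤ 3)
    (hcard : G.edgeFinset.card = 3 * t + 1)
    (hP3 : ∃ v : V, IsP3Component G (compSet G v)) :
    3 * t + 3 ≤ {v : V | ∃ w, G.Adj v w}.ncard ∧
      ∀ H : SimpleGraph V,
        (∀ v : V, IsTriangleComponent H (compSet H v) ∨ compSet H v = {v}) →
        {v : V | ∃ w, H.Adj v w}.ncard = 3 * t →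
        3 ≤ {v : V | (∃ w, G.Adj v w) ∧ ¬ ∃ w, H.Adj v w}.ncard := by
  classical
  have hmain := support_lemma G t hG hcard hP3
  refine ⟨hmain, ?_⟩
  intro H _ hHcard
  set A : Finset V := Finset.univ.filter (fun v => ∃ w, G.Adj v w) with hA
  set B : Finset V := Finset.univ.filter (fun v => ∃ w, H.Adj v w) with hB
  have hAset : {v : V | ∃ w, G.Adj v w} = ↑A := by ext v; simp [hA]
  have hBset : {v : V | ∃ w, H.Adj v w} = ↑B := by ext v; simp [hB]
  have hDset : {v : V | (∃ w, G.Adj v w) ∧ ¬ ∃ w, H.Adj v w} = ↑(A \ B) := by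
    ext v; simp [hA, hB]
  rw [hAset, Set.ncard_coe_finset] at hmain
  rw [hBset, Set.ncard_coe_finset] at hHcard
  rw [hDset, Set.ncard_coe_finset]
  have := Finset.card_le_card_sdiff_add_card (s := A) (t := B)
  omega
end

section
/- Let V be a finite vertex set, let u ∈ V, and let R and B be edge-disjoint graphs on V such that every vertex has degree at most 2 in R, and the edges of B form a path whose vertex set P is contained in V \ {u}, with endpoints a and b. If there are at least three vertices in V \ {u} that do not lie on the path P, then there exist an endpoint x ∈ {a, b} of the path and a vertex s ∈ V \ {u} not on P such that the edge xs belongs to neither R nor B. -/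
/-- Claim 4.1 of the strong CAvoider-CAvoider `S3` game: let `V` be a finite
vertex set, `u ∈ V`, and let `R` and `B` be edge-disjoint graphs on `V` such
that every vertex has degree at most `2` in `R` (no three distinct
`R`-neighbours), and the edges of `B` are exactly those of a path `p` from `a`
to `b` whose vertex set `P` avoids `u`.  If at least three vertices of
`V \ {u}` lie outside `P`, then some endpoint `x ∈ {a, b}` of the path and
some vertex `s ∈ V \ {u}` off the path span an edge claimed by neither `R`
nor `B`. -/
theorem path_extension_exists {V : Type*} [Fintype V] (u : V)
    (R B : SimpleGraph V)
    (hdisj : ∀ v w : V, ¬ (R.Adj v w ∧ B.Adj v w))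
    (hdeg : ∀ v x y z : V, R.Adj v x → R.Adj v y → R.Adj v z →
      x = y ∨ x = z ∨ y = z)
    (a b : V) (p : B.Walk a b) (hp : p.IsPath)
    (hedges : ∀ v w : V, B.Adj v w ↔ s(v, w) ∈ p.edges)
    (P : Set V) (hP : P = {v | v ∈ p.support})
    (hPu : u ∉ P)
    (hout : 3 ≤ (Set.univ \ insert u P).ncard) :
    ∃ x ∈ ({a, b} : Set V), ∃ s : V,
      s ∉ P ∧ s ≠ u ∧ x ≠ s ∧ ¬ R.Adj x s ∧ ¬ B.Adj x s := by
  obtain ⟨s1, hs1, s2, hs2, s3, hs3, h12, h13, h23⟩ :=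
    (Set.two_lt_ncard (Set.toFinite (Set.univ \ insert u P))).mp (by omega)
  have hmem : ∀ s, s ∈ Set.univ \ insert u P → s ∉ P ∧ s ≠ u := by
    rintro s ⟨-, hs⟩
    simp only [Set.mem_insert_iff, not_or] at hs
    exact ⟨hs.2, hs.1⟩
  obtain ⟨h1P, h1u⟩ := hmem _ hs1
  obtain ⟨h2P, h2u⟩ := hmem _ hs2
  obtain ⟨h3P, h3u⟩ := hmem _ hs3
  have haP : a ∈ P := by rw [hP]; exact p.start_mem_support
  have hB : ∀ s, s ∉ P → ¬ B.Adj a s := by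
    intro s hs hadj
    have := SimpleGraph.Walk.snd_mem_support_of_mem_edges p ((hedges a s).mp hadj)
    rw [hP] at hs
    exact hs this
  have key : ∃ s, s ∉ P ∧ s ≠ u ∧ ¬ R.Adj a s := by
    by_cases r1 : R.Adj a s1
    · by_cases r2 : R.Adj a s2
      · refine ⟨s3, h3P, h3u, fun r3 => ?_⟩
        rcases hdeg a s1 s2 s3 r1 r2 r3 with h | h | h
        exacts [h12 h, h13 h, h23 h]
      · exact ⟨s2, h2P, h2u, r2⟩
    · exact ⟨s1, h1P, h1u, r1⟩
  obtain ⟨s, hsP, hsu, hR⟩ := key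
  exact ⟨a, Or.inl rfl, s, hsP, hsu, fun h => hsP (h ▸ haP), hR, hB s hsP⟩
end
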